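/- arXiv:0903.4902 — 3 statements merged into one kernel-verified Lean document; each statement's English description precedes it below -/
import Mathlib

section
/- Let μ ∈ (0,1), let c : ℝ → ℝ be continuously differentiable with c(0) > 0, and suppose r : ℕ × ℝ → ℝ satisfies |r(ν,λ)| ≤ ε_ν·μ^ν and |∂_λ r(ν,λ)| ≤ ε_ν·μ^ν for λ in a fixed neighborhood of 0, where ε_ν → 0. Then there is N such that for every ν > N the equation λ + c(λ)·μ^ν + r(ν,λ) = 0 has a unique solution λ_ν in that neighborhood, and the sequence (λ_ν) is eventually strictly monotonically increasing with λ_ν → 0 and λ_ν = -c(0)μ^ν(1 + o(1)). -/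
open Filter Metric Topology

/-
For large `ν` the map `λ ↦ λ + c(λ)μ^ν + r(ν,λ)` is a perturbation of the identity by a term of
size `O(μ^ν)` in `C¹` on the ball of radius `δ`, so it is strictly increasing there and changes
sign at `±δ`: it has exactly one zero `λ_ν`, and `|λ_ν| = O(μ^ν)`. Dividing the equation by
`-c(0)μ^ν` gives `λ_ν / (-c(0)μ^ν) = c(λ_ν)/c(0) + o(1) → 1`. Hence
`λ_{ν+1} - λ_ν = c(0)μ^ν(1 - μ + o(1)) > 0` eventually.
-/

lemma abs_mul_add_le_of_abs_le {a b m C ε : ℝ} (hm : 0 ≤ m) (ha : |a| ≤ C) (hb : |b| ≤ ε * m) :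
    |a * m + b| ≤ (C + ε) * m :=
  calc |a * m + b| ≤ |a| * m + |b| := by
        simpa [abs_mul, abs_of_nonneg hm] using abs_add_le (a * m) b
    _ ≤ C * m + ε * m := by gcongr
    _ = (C + ε) * m := by ring

lemma exists_abs_le_and_abs_deriv_le {c : ℝ → ℝ} (hc : ContDiff ℝ 1 c) {s : Set ℝ}
    (hs : IsCompact s) : ∃ C, ∀ x ∈ s, |c x| ≤ C ∧ |deriv c x| ≤ C := by
  obtain ⟨C₁, hC₁⟩ := hs.exists_bound_of_continuousOn hc.continuous.continuousOn
  obtain ⟨C₂, hC₂⟩ := hs.exists_bound_of_continuousOn (hc.continuous_deriv le_rfl).continuousOn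
  exact ⟨max C₁ C₂, fun x hx =>
    ⟨(hC₁ x hx).trans (le_max_left _ _), (hC₂ x hx).trans (le_max_right _ _)⟩⟩

lemma existsUnique_add_eq_zero_of_deriv_gt {g g' : ℝ → ℝ} {δ : ℝ} (hδ : 0 ≤ δ)
    (hg : ∀ x ∈ closedBall (0 : ℝ) δ, HasDerivAt g (g' x) x)
    (hg' : ∀ x ∈ closedBall (0 : ℝ) δ, -1 < g' x)
    (hgb : ∀ x ∈ closedBall (0 : ℝ) δ, |g x| ≤ δ) :
    ∃ x ∈ closedBall (0 : ℝ) δ, x + g x = 0 ∧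
      ∀ y ∈ closedBall (0 : ℝ) δ, y + g y = 0 → y = x := by
  have hball : closedBall (0 : ℝ) δ = Set.Icc (-δ) δ := by
    rw [Real.closedBall_eq_Icc, zero_sub, zero_add]
  rw [hball] at hg hg' hgb ⊢
  have hcont : ContinuousOn (fun x => x + g x) (Set.Icc (-δ) δ) := fun x hx =>
    (continuousAt_id.add (hg x hx).continuousAt).continuousWithinAt
  have hmono : StrictMonoOn (fun x => x + g x) (Set.Icc (-δ) δ) := by
    refine strictMonoOn_of_deriv_pos (convex_Icc _ _) hcont fun x hx => ?_
    have hx' := interior_subset hx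
    rw [((hasDerivAt_id' x).fun_add (hg x hx')).deriv]
    linarith [hg' x hx']
  have hleft : -δ + g (-δ) ≤ 0 := by linarith [le_abs_self (g (-δ)), hgb (-δ) ⟨le_rfl, by linarith⟩]
  have hright : 0 ≤ δ + g δ := by linarith [neg_abs_le (g δ), hgb δ ⟨by linarith, le_rfl⟩]
  obtain ⟨x, hx, hx0⟩ := intermediate_value_Icc (by linarith) hcont ⟨hleft, hright⟩
  exact ⟨x, hx, hx0, fun y hy hy0 => hmono.injOn hy hx (hy0.trans hx0.symm)⟩

lemma existsUnique_add_mul_add_eq_zero {c r r' : ℝ → ℝ} {m δ C ε : ℝ} (hm : 0 ≤ m) (hδ : 0 ≤ δ)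
    (hc : Differentiable ℝ c) (hC : ∀ x ∈ closedBall (0 : ℝ) δ, |c x| ≤ C ∧ |deriv c x| ≤ C)
    (hr' : ∀ x ∈ closedBall (0 : ℝ) δ, HasDerivAt r (r' x) x)
    (hrb : ∀ x ∈ closedBall (0 : ℝ) δ, |r x| ≤ ε * m)
    (hr'b : ∀ x ∈ closedBall (0 : ℝ) δ, |r' x| ≤ ε * m)
    (hsmall : (C + ε) * m < 1) (hsmall' : (C + ε) * m ≤ δ) :
    ∃ x ∈ closedBall (0 : ℝ) δ, x + c x * m + r x = 0 ∧
      ∀ y ∈ closedBall (0 : ℝ) δ, y + c y * m + r y = 0 → y = x := by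
  simp_rw [add_assoc]
  refine existsUnique_add_eq_zero_of_deriv_gt (g' := fun x => deriv c x * m + r' x) hδ
    (fun x hx => ((hc x).hasDerivAt.mul_const m).add (hr' x hx)) (fun x hx => ?_)
    (fun x hx => (abs_mul_add_le_of_abs_le hm (hC x hx).1 (hrb x hx)).trans hsmall')
  have := abs_mul_add_le_of_abs_le hm (hC x hx).2 (hr'b x hx)
  linarith [neg_abs_le (deriv c x * m + r' x)]

lemma tendsto_div_neg_mul_pow_of_root {μ : ℝ} {c : ℝ → ℝ} {r : ℕ → ℝ → ℝ} {ε l : ℕ → ℝ}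
    (hμ : 0 < μ) (hc : ContinuousAt c 0) (hc0 : c 0 ≠ 0) (hε : Tendsto ε atTop (𝓝 0))
    (hl : Tendsto l atTop (𝓝 0))
    (hroot : ∀ᶠ ν in atTop, l ν + c (l ν) * μ ^ ν + r ν (l ν) = 0)
    (hrb : ∀ᶠ ν in atTop, |r ν (l ν)| ≤ ε ν * μ ^ ν) :
    Tendsto (fun ν => l ν / (-(c 0) * μ ^ ν)) atTop (𝓝 1) := by
  have hrem : Tendsto (fun ν => r ν (l ν) / (c 0 * μ ^ ν)) atTop (𝓝 0) := by
    refine squeeze_zero_norm' ?_ (by simpa using hε.div_const |c 0|)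
    filter_upwards [hrb] with ν hν
    have hμν : 0 < μ ^ ν := pow_pos hμ ν
    rw [Real.norm_eq_abs, abs_div, abs_mul, abs_of_pos hμν, le_div_iff₀ (abs_pos.mpr hc0),
      div_mul_eq_mul_div, div_le_iff₀ (by positivity)]
    nlinarith [abs_nonneg (c 0)]
  have hsum := ((hc.tendsto.comp hl).div_const (c 0)).add hrem
  rw [div_self hc0, add_zero] at hsum
  refine hsum.congr' ?_
  filter_upwards [hroot] with ν hν
  have hμν : μ ^ ν ≠ 0 := (pow_pos hμ ν).ne'
  simp only [Function.comp_apply]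
  field_simp
  linear_combination hν

lemma eventually_lt_succ_of_tendsto_div_neg_mul_pow {a μ : ℝ} {l : ℕ → ℝ} (ha : 0 < a)
    (hμ0 : 0 < μ) (hμ1 : μ < 1) (h : Tendsto (fun ν => l ν / (-a * μ ^ ν)) atTop (𝓝 1)) :
    ∀ᶠ ν in atTop, l ν < l (ν + 1) := by
  set u := fun ν => l ν / (-a * μ ^ ν)
  have hlim : Tendsto (fun ν => μ * u (ν + 1) - u ν) atTop (𝓝 (μ * 1 - 1)) :=
    ((h.comp (tendsto_add_atTop_nat 1)).const_mul μ).sub h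
  filter_upwards [hlim.eventually_lt_const (show μ * 1 - 1 < 0 by linarith)] with ν hν
  have hμν : 0 < μ ^ ν := pow_pos hμ0 ν
  have hdiff : l (ν + 1) - l ν = (-a * μ ^ ν) * (μ * u (ν + 1) - u ν) := by
    simp only [u]
    field_simp
    ring
  linarith [mul_pos_of_neg_of_neg (by nlinarith : -a * μ ^ ν < 0) hν]

/-- Corollary `Xi_r_zeros_n=3` (i): for `μ ∈ (0,1)`, `c(0) > 0`, the zeros `λ_ν` of
`λ + c(λ)μ^ν + r(ν,λ)` are unique near `0`, eventually strictly increasing,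
tend to `0`, and satisfy `λ_ν = -c(0)μ^ν(1+o(1))`. -/
theorem stmt_1 (μ : ℝ) (hμ : μ ∈ Set.Ioo (0:ℝ) 1)
    (c : ℝ → ℝ) (hc : ContDiff ℝ 1 c) (hc0 : 0 < c 0)
    (δ : ℝ) (hδ : 0 < δ)
    (r r' : ℕ → ℝ → ℝ) (ε : ℕ → ℝ) (hε : Tendsto ε atTop (nhds 0))
    (hr' : ∀ ν : ℕ, ∀ lam ∈ Metric.closedBall (0:ℝ) δ, HasDerivAt (r ν) (r' ν lam) lam)
    (hrb : ∀ ν : ℕ, ∀ lam ∈ Metric.closedBall (0:ℝ) δ, |r ν lam| ≤ ε ν * μ ^ ν)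
    (hr'b : ∀ ν : ℕ, ∀ lam ∈ Metric.closedBall (0:ℝ) δ, |r' ν lam| ≤ ε ν * μ ^ ν) :
    ∃ N : ℕ, ∃ l : ℕ → ℝ,
      (∀ ν > N, l ν ∈ Metric.closedBall (0:ℝ) δ ∧
        l ν + c (l ν) * μ ^ ν + r ν (l ν) = 0 ∧
        ∀ lam ∈ Metric.closedBall (0:ℝ) δ,
          lam + c lam * μ ^ ν + r ν lam = 0 → lam = l ν) ∧
      (∃ N' : ℕ, ∀ ν ≥ N', l ν < l (ν + 1)) ∧
      Tendsto l atTop (nhds 0) ∧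
      Tendsto (fun ν => l ν / (-(c 0) * μ ^ ν)) atTop (nhds 1) := by
  obtain ⟨hμ0, hμ1⟩ := hμ
  obtain ⟨C, hC⟩ := exists_abs_le_and_abs_deriv_le hc (isCompact_closedBall (0 : ℝ) δ)
  have hsize : Tendsto (fun ν => (C + ε ν) * μ ^ ν) atTop (𝓝 0) := by
    simpa using (tendsto_const_nhds.add hε).mul (tendsto_pow_atTop_nhds_zero_of_lt_one hμ0.le hμ1)
  obtain ⟨N, hN⟩ := eventually_atTop.mp (hsize.eventually_lt_const (lt_min one_pos hδ))
  have hroot : ∀ ν, ∃ x, N ≤ ν → x ∈ closedBall (0 : ℝ) δ ∧ x + c x * μ ^ ν + r ν x = 0 ∧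
      ∀ y ∈ closedBall (0 : ℝ) δ, y + c y * μ ^ ν + r ν y = 0 → y = x := by
    intro ν
    by_cases hν : N ≤ ν
    · obtain ⟨x, hx, hx0, huniq⟩ := existsUnique_add_mul_add_eq_zero (pow_nonneg hμ0.le ν) hδ.le
        (hc.differentiable one_ne_zero) hC (hr' ν) (hrb ν) (hr'b ν)
        ((hN ν hν).trans_le (min_le_left _ _)) ((hN ν hν).le.trans (min_le_right _ _))
      exact ⟨x, fun _ => ⟨hx, hx0, huniq⟩⟩
    · exact ⟨0, fun h => absurd h hν⟩
  choose l hl using hroot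
  have hl0 : Tendsto l atTop (𝓝 0) := by
    refine squeeze_zero_norm' ?_ hsize
    filter_upwards [eventually_ge_atTop N] with ν hν
    obtain ⟨hmem, hx0, -⟩ := hl ν hν
    rw [Real.norm_eq_abs, eq_neg_of_add_eq_zero_left ((add_assoc _ _ _).symm.trans hx0), abs_neg]
    exact abs_mul_add_le_of_abs_le (pow_nonneg hμ0.le ν) (hC _ hmem).1 (hrb ν _ hmem)
  have hratio := tendsto_div_neg_mul_pow_of_root hμ0 hc.continuous.continuousAt hc0.ne' hε hl0
    (eventually_atTop.mpr ⟨N, fun ν hν => (hl ν hν).2.1⟩)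
    (eventually_atTop.mpr ⟨N, fun ν hν => hrb ν _ (hl ν hν).1⟩)
  exact ⟨N, l, fun ν hν => hl ν hν.le,
    eventually_atTop.mp (eventually_lt_succ_of_tendsto_div_neg_mul_pow hc0 hμ0 hμ1 hratio),
    hl0, hratio⟩
end

section
/- Let A be an invertible real n×n matrix whose spectrum splits as σ_s ∪ σ_u with |μ| < 1 for μ ∈ σ_s and |μ| > 1 for μ ∈ σ_u, and suppose the largest modulus element μ_s of σ_s is real, simple, with eigenvector e_s, and the adjoint eigenvector ψ_s of Aᵀ for μ_s satisfies ⟨ψ_s, e_s⟩ ≠ 0. If v ∈ ℝⁿ lies in the stable subspace of A and ⟨ψ_s, v⟩ ≠ 0, then Aⁿv = c·μ_sⁿ·e_s + o(|μ_s|ⁿ) as n → ∞, for some constant c ≠ 0. -/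
open Filter Matrix Topology

/-!
Put `c = ⟨ψ, v⟩ / ⟨ψ, e⟩` and `w = v - c • e`, so that `⟨ψ, w⟩ = 0` and `Aᵏ w → 0`. Over `ℂ`, the
stable vectors annihilated by `ψ` form an `A`-invariant subspace `W` (`ψ` is a left eigenvector),
and every eigenvalue `ζ` of `A` on `W` satisfies `|ζ| < |μ|`: stability gives `|ζ| < 1`, the
spectral gap leaves `ζ = μ` or `|ζ| < |μ|`, and `ζ = μ` is impossible since an eigenvector in
`ker ψ` together with `e` would make `μ` a multiple root of the characteristic polynomial.
So `μ⁻¹ A` has spectral radius `< 1` on `W`, and Gelfand's formula gives `μ⁻ᵏ Aᵏ w → 0`.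
-/

section SpectralRadius

variable {A : Type*} [NormedRing A] [NormedAlgebra ℂ A] [CompleteSpace A]

theorem tendsto_pow_atTop_nhds_zero_of_spectralRadius_lt_one {a : A}
    (ha : spectralRadius ℂ a < 1) : Tendsto (fun k : ℕ => a ^ k) atTop (𝓝 0) := by
  obtain ⟨ρ, hρa, hρ1⟩ := ENNReal.lt_iff_exists_nnreal_btwn.mp ha
  have hgelfand := spectrum.pow_nnnorm_pow_one_div_tendsto_nhds_spectralRadius a
  have hbound : ∀ᶠ k : ℕ in atTop, ‖a ^ k‖ ≤ (ρ : ℝ) ^ k := by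
    filter_upwards [hgelfand.eventually_lt_const hρa, eventually_gt_atTop 0] with k hk hk0
    rw [one_div, ENNReal.rpow_inv_lt_iff (by positivity), ENNReal.rpow_natCast] at hk
    exact_mod_cast hk.le
  exact squeeze_zero_norm' hbound
    (tendsto_pow_atTop_nhds_zero_of_lt_one ρ.coe_nonneg (by exact_mod_cast hρ1))

end SpectralRadius

namespace Module.End

variable {V : Type*} [NormedAddCommGroup V] [NormedSpace ℂ V] [FiniteDimensional ℂ V]

theorem tendsto_pow_apply_of_norm_eigenvalue_lt_one (f : Module.End ℂ V)
    (hf : ∀ z, f.HasEigenvalue z → ‖z‖ < 1) (x : V) :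
    Tendsto (fun k : ℕ => (f ^ k) x) atTop (𝓝 0) := by
  cases subsingleton_or_nontrivial V
  · simp [Subsingleton.elim x 0]
  have : CompleteSpace V := FiniteDimensional.complete ℂ V
  let e : Module.End ℂ V ≃ₐ[ℂ] (V →L[ℂ] V) :=
    AlgEquiv.ofLinearEquiv LinearMap.toContinuousLinearMap rfl fun _ _ => rfl
  have hρ : spectralRadius ℂ (e f) < 1 := by
    refine spectrum.spectralRadius_lt_of_forall_lt (e f) fun z hz => ?_
    rw [AlgEquiv.spectrum_eq, ← Module.End.hasEigenvalue_iff_mem_spectrum] at hz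
    exact_mod_cast hf z hz
  refine (((ContinuousLinearMap.apply ℂ V x).continuous.tendsto 0).comp
    (tendsto_pow_atTop_nhds_zero_of_spectralRadius_lt_one hρ)).congr fun k => ?_
  change (e f ^ k) x = (f ^ k) x
  rw [← map_pow]
  rfl

theorem tendsto_pow_apply_of_norm_eigenvalue_lt_one_on (f : Module.End ℂ V) {W : Submodule ℂ V}
    (hW : ∀ x ∈ W, f x ∈ W) (hf : ∀ (z : ℂ) x, x ∈ W → x ≠ 0 → f x = z • x → ‖z‖ < 1)
    {x : V} (hx : x ∈ W) : Tendsto (fun k : ℕ => (f ^ k) x) atTop (𝓝 0) := by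
  have h := tendsto_pow_apply_of_norm_eigenvalue_lt_one (f.restrict hW) ?_ ⟨x, hx⟩
  · refine ((continuous_subtype_val.tendsto 0).comp h).congr fun k => ?_
    simp [Module.End.pow_restrict k hW]
  · intro z hz
    obtain ⟨y, hy⟩ := hz.exists_hasEigenvector
    exact hf z y y.2 (by simpa using hy.2) (by simpa using congrArg Subtype.val hy.apply_eq_smul)

end Module.End

namespace Matrix

variable {ι : Type*} [Fintype ι]

theorem map_mulVec_comp {R S : Type*} [CommSemiring R] [CommSemiring S] (f : R →+* S)
    (M : Matrix ι ι R) (x : ι → R) : M.map f *ᵥ (f ∘ x) = f ∘ (M *ᵥ x) :=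
  funext fun i => (RingHom.map_mulVec f M x i).symm

theorem map_mulVec_comp_of_mulVec_eq_smul {R S : Type*} [CommSemiring R] [CommSemiring S]
    (f : R →+* S) {M : Matrix ι ι R} {x : ι → R} {μ : R} (h : M *ᵥ x = μ • x) :
    M.map f *ᵥ (f ∘ x) = f μ • (f ∘ x) := by
  ext i
  simp [map_mulVec_comp, h]

variable [DecidableEq ι]

theorem pow_mulVec_of_mulVec_eq_smul {R : Type*} [CommSemiring R] {M : Matrix ι ι R}
    {x : ι → R} {μ : R} (h : M *ᵥ x = μ • x) (k : ℕ) :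
    (M ^ k) *ᵥ x = μ ^ k • x := by
  induction k with
  | zero => simp
  | succ k ih => rw [pow_succ, ← mulVec_mulVec, h, mulVec_smul, ih, smul_smul, ← pow_succ']

section Stable

variable {R : Type*} [CommRing R] [TopologicalSpace R] [IsTopologicalRing R]

def stableSubmodule (M : Matrix ι ι R) : Submodule R (ι → R) where
  carrier := {x | Tendsto (fun k : ℕ => (M ^ k) *ᵥ x) atTop (𝓝 0)}
  add_mem' ha hb := by simpa [mulVec_add] using ha.add hb
  zero_mem' := by simpa using tendsto_const_nhds
  smul_mem' r x hx := by simpa [mulVec_smul] using hx.const_smul r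

variable {M : Matrix ι ι R} {x : ι → R}

theorem mem_stableSubmodule :
    x ∈ M.stableSubmodule ↔ Tendsto (fun k : ℕ => (M ^ k) *ᵥ x) atTop (𝓝 0) :=
  Iff.rfl

theorem mulVec_mem_stableSubmodule (hx : x ∈ M.stableSubmodule) :
    M *ᵥ x ∈ M.stableSubmodule := by
  simpa [mem_stableSubmodule, Function.comp_def, pow_succ] using
    hx.comp (tendsto_add_atTop_nat 1)

theorem comp_mem_stableSubmodule_map {S : Type*} [CommRing S] [TopologicalSpace S]
    [IsTopologicalRing S] (f : R →+* S) (hf : Continuous f) (hx : x ∈ M.stableSubmodule) :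
    f ∘ x ∈ (M.map f).stableSubmodule := by
  have hcomp : Continuous fun y : ι → R => f ∘ y :=
    continuous_pi fun i => hf.comp (continuous_apply i)
  refine ((hcomp.tendsto' 0 0 (by ext; simp)).comp hx).congr fun k => ?_
  ext i
  simp [← Matrix.map_pow, RingHom.map_mulVec]

end Stable

theorem norm_lt_one_of_mem_stableSubmodule {𝕜 : Type*} [NormedField 𝕜] {M : Matrix ι ι 𝕜}
    {ζ : 𝕜} {x : ι → 𝕜} (hx : x ∈ M.stableSubmodule) (hx0 : x ≠ 0) (hMx : M *ᵥ x = ζ • x) :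
    ‖ζ‖ < 1 := by
  obtain ⟨i, hi⟩ : ∃ i, x i ≠ 0 := Function.ne_iff.mp hx0
  rw [← tendsto_pow_atTop_nhds_zero_iff_norm_lt_one]
  have h := ((continuous_apply i).tendsto 0).comp hx
  simp only [Function.comp_def, pow_mulVec_of_mulVec_eq_smul hMx, Pi.smul_apply, smul_eq_mul,
    Pi.zero_apply] at h
  simpa [mul_inv_cancel_right₀ hi] using h.mul_const (x i)⁻¹

theorem two_le_rootMultiplicity_charpoly_of_linearIndependent {K : Type*} [Field K]
    {M : Matrix ι ι K} {μ : K} {x y : ι → K} (hxy : LinearIndependent K ![x, y])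
    (hx : M *ᵥ x = μ • x) (hy : M *ᵥ y = μ • y) : 2 ≤ M.charpoly.rootMultiplicity μ := by
  rw [← charpoly_toLin']
  have hspan : Submodule.span K (Set.range ![x, y]) ≤ Module.End.eigenspace (toLin' M) μ := by
    rw [Submodule.span_le, Set.range_subset_iff]
    intro i
    fin_cases i <;> simpa [Module.End.mem_eigenspace_iff]
  calc 2 = Module.finrank K (Submodule.span K (Set.range ![x, y])) :=
        (finrank_span_eq_card hxy).symm.trans (by simp)
    _ ≤ _ := Submodule.finrank_mono hspan
    _ ≤ _ := LinearMap.finrank_eigenspace_le _ μ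

theorem norm_lt_of_mulVec_eq_smul_of_dotProduct_eq_zero {𝕜 : Type*} [NormedField 𝕜]
    {M : Matrix ι ι 𝕜} {μ : 𝕜}
    (hlead : ∀ z ∈ spectrum 𝕜 M, ‖z‖ < 1 → z = μ ∨ ‖z‖ < ‖μ‖)
    (hsimple : M.charpoly.rootMultiplicity μ = 1) {e ψ : ι → 𝕜} (he : M *ᵥ e = μ • e)
    (hψe : ψ ⬝ᵥ e ≠ 0) {ζ : 𝕜} {x : ι → 𝕜} (hx : x ∈ M.stableSubmodule) (hψx : ψ ⬝ᵥ x = 0)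
    (hx0 : x ≠ 0) (hMx : M *ᵥ x = ζ • x) : ‖ζ‖ < ‖μ‖ := by
  have hζ : ζ ∈ spectrum 𝕜 M := by
    rw [← spectrum_toLin']
    exact Module.End.HasEigenvalue.mem_spectrum (Module.End.hasEigenvalue_of_hasEigenvector
      ⟨by simpa [Module.End.mem_eigenspace_iff], hx0⟩)
  rcases hlead ζ hζ (norm_lt_one_of_mem_stableSubmodule hx hx0 hMx) with rfl | h
  · have hex : LinearIndependent 𝕜 ![e, x] := by
      rw [LinearIndependent.pair_iff]
      intro s t hst
      have hs : s = 0 := by simpa [hψx, hψe] using congrArg (ψ ⬝ᵥ ·) hst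
      subst hs
      simp_all
    have := two_le_rootMultiplicity_charpoly_of_linearIndependent hex he hMx
    omega
  · exact h

theorem tendsto_inv_pow_smul_pow_mulVec {M : Matrix ι ι ℂ} {μ : ℂ} (hμ : μ ≠ 0) {ψ : ι → ℂ}
    (hψ : Mᵀ *ᵥ ψ = μ • ψ)
    (hgap : ∀ (ζ : ℂ) (x : ι → ℂ), x ∈ M.stableSubmodule → ψ ⬝ᵥ x = 0 → x ≠ 0 →
      M *ᵥ x = ζ • x → ‖ζ‖ < ‖μ‖)
    {x : ι → ℂ} (hx : x ∈ M.stableSubmodule) (hψx : ψ ⬝ᵥ x = 0) :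
    Tendsto (fun k : ℕ => μ⁻¹ ^ k • (M ^ k) *ᵥ x) atTop (𝓝 0) := by
  set W := M.stableSubmodule ⊓ LinearMap.ker (dotProductBilin ℂ ℂ ψ)
  have hmem : ∀ y, y ∈ W ↔ y ∈ M.stableSubmodule ∧ ψ ⬝ᵥ y = 0 := fun y => by simp [W]
  have hW : ∀ y ∈ W, (μ⁻¹ • toLin' M) y ∈ W := by
    intro y hy
    rw [hmem] at hy ⊢
    refine ⟨by simpa using M.stableSubmodule.smul_mem μ⁻¹ (mulVec_mem_stableSubmodule hy.1), ?_⟩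
    simp [dotProduct_mulVec, ← mulVec_transpose, hψ, hy.2]
  have h := Module.End.tendsto_pow_apply_of_norm_eigenvalue_lt_one_on (μ⁻¹ • toLin' M) hW ?_
    ((hmem x).2 ⟨hx, hψx⟩)
  · simpa [smul_pow, ← toLin'_pow] using h
  · intro z y hy hy0 hzy
    have hMy : M *ᵥ y = (μ * z) • y := by
      rw [mul_smul, ← hzy]
      simp [hμ]
    have := hgap (μ * z) y ((hmem y).1 hy).1 ((hmem y).1 hy).2 hy0 hMy
    rw [norm_mul] at this
    exact (mul_lt_iff_lt_one_right (norm_pos_iff.2 hμ)).1 this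

end Matrix

theorem norm_algebraMap_comp {ι : Type*} [Fintype ι] (y : ι → ℝ) :
    ‖algebraMap ℝ ℂ ∘ y‖ = ‖y‖ := by
  simp [Pi.norm_def, Complex.nnnorm_real]

theorem stmt_7_general (n : ℕ) (A : Matrix (Fin n) (Fin n) ℝ)
    (μs : ℝ) (hμs0 : 0 < |μs|) (hμs1 : |μs| < 1)
    (es : Fin n → ℝ) (hAes : A.mulVec es = μs • es)
    (hlead : ∀ z ∈ spectrum ℂ (A.map (algebraMap ℝ ℂ)),
      ‖z‖ < 1 → z = (μs : ℂ) ∨ ‖z‖ < |μs|)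
    (hsimple : Polynomial.rootMultiplicity μs A.charpoly = 1)
    (ψs : Fin n → ℝ) (hAψs : Aᵀ.mulVec ψs = μs • ψs)
    (hnondeg : ψs ⬝ᵥ es ≠ 0)
    (v : Fin n → ℝ)
    (hvstable : Tendsto (fun k : ℕ => (A ^ k).mulVec v) atTop (nhds 0))
    (hvflip : ψs ⬝ᵥ v ≠ 0) :
    ∃ c : ℝ, c ≠ 0 ∧
      Tendsto (fun k : ℕ => ‖(A ^ k).mulVec v - (c * μs ^ k) • es‖ / |μs| ^ k)
        atTop (nhds 0) := by
  set c := (ψs ⬝ᵥ v) / (ψs ⬝ᵥ es)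
  refine ⟨c, div_ne_zero hvflip hnondeg, ?_⟩
  set w := v - c • es
  have hes : es ∈ A.stableSubmodule := by
    simpa [mem_stableSubmodule, pow_mulVec_of_mulVec_eq_smul hAes] using
      (tendsto_pow_atTop_nhds_zero_of_abs_lt_one hμs1).smul_const es
  have hw : w ∈ A.stableSubmodule := sub_mem hvstable (Submodule.smul_mem _ c hes)
  have hψw : ψs ⬝ᵥ w = 0 := by
    rw [dotProduct_sub, dotProduct_smul, smul_eq_mul, div_mul_cancel₀ _ hnondeg, sub_self]
  let f := algebraMap ℝ ℂ
  have hfμ : ‖f μs‖ = |μs| := by simp [f]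
  have key := tendsto_inv_pow_smul_pow_mulVec (M := A.map f) (μ := f μs)
    (by simpa [f] using hμs0)
    (by rw [← transpose_map, map_mulVec_comp_of_mulVec_eq_smul f hAψs])
    (fun _ _ => norm_lt_of_mulVec_eq_smul_of_dotProduct_eq_zero (by rw [hfμ]; exact hlead)
      (by rw [charpoly_map, ← Polynomial.eq_rootMultiplicity_map f.injective, hsimple])
      (map_mulVec_comp_of_mulVec_eq_smul f hAes) (by rwa [← RingHom.map_dotProduct, map_ne_zero]))
    (comp_mem_stableSubmodule_map f Complex.continuous_ofReal hw)
    (by rw [← RingHom.map_dotProduct, hψw, map_zero])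
  have hlim := key.norm
  rw [norm_zero] at hlim
  refine hlim.congr fun k => ?_
  rw [← Matrix.map_pow, map_mulVec_comp, norm_smul, norm_algebraMap_comp, norm_pow, norm_inv, hfμ,
    mulVec_sub, mulVec_smul, pow_mulVec_of_mulVec_eq_smul hAes, smul_smul, inv_pow, inv_mul_eq_div]

/-- Leading-order asymptotics of iterates in the stable subspace of a hyperbolic
matrix with a real simple leading stable eigenvalue (underlying `est_beta` in the
proof of Lemma `lambdalemma_b`). -/
theorem stmt_7 (n : ℕ) (A : Matrix (Fin n) (Fin n) ℝ) (hA : IsUnit A.det)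
    (hhyp : ∀ z ∈ spectrum ℂ (A.map (algebraMap ℝ ℂ)), ‖z‖ ≠ 1)
    (μs : ℝ) (hμs0 : 0 < |μs|) (hμs1 : |μs| < 1)
    (es : Fin n → ℝ) (hes : es ≠ 0) (hAes : A.mulVec es = μs • es)
    (hlead : ∀ z ∈ spectrum ℂ (A.map (algebraMap ℝ ℂ)),
      ‖z‖ < 1 → z = (μs : ℂ) ∨ ‖z‖ < |μs|)
    (hsimple : Polynomial.rootMultiplicity μs A.charpoly = 1)
    (ψs : Fin n → ℝ) (hψs : ψs ≠ 0) (hAψs : Aᵀ.mulVec ψs = μs • ψs)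
    (hnondeg : ψs ⬝ᵥ es ≠ 0)
    (v : Fin n → ℝ)
    (hvstable : Tendsto (fun k : ℕ => (A ^ k).mulVec v) atTop (nhds 0))
    (hvflip : ψs ⬝ᵥ v ≠ 0) :
    ∃ c : ℝ, c ≠ 0 ∧
      Tendsto (fun k : ℕ => ‖(A ^ k).mulVec v - (c * μs ^ k) • es‖ / |μs| ^ k)
        atTop (nhds 0) :=
  stmt_7_general n A μs hμs0 hμs1 es hAes hlead hsimple ψs hAψs hnondeg v hvstable hvflip
end

section
/- Let μ_u > 1, and let c^u, c^l : ℝ × ℝ² → ℝ be continuous with c^l(0,0) ≠ 0. Suppose R_ν(u,λ) is a remainder with sup over a fixed neighborhood of |R_ν|/μ_u^{−ν} → 0. Consider the system λ_r + c^u(u,λ)·μ_sν + r_ν(u,λ) = 0, λ_l − u² + c^l(u,λ)·μ_u^{−ν} + R_ν(u,λ) = 0 with μ_s ∈ (0,1) and r_ν = o(μ_sν) uniformly, all functions C¹ with derivatives obeying the same smallness. Then for every sufficiently large ν and every u in a fixed neighborhood of 0 there is a unique solution λ(u,ν) = (λ_r, λ_l)(u,ν) near 0, and λ(u,ν) → (0,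 u²) uniformly in u as ν → ∞. -/
/-
The system is a fixed-point problem `λ = F(λ)` with
`F(λ) = (-(c^u μ_s^ν + r_ν), u² - (c^l μ_u^{-ν} + R_ν))`. On a fixed compact neighbourhood the
coefficients `c^u, c^l` and their derivatives are bounded, so by the mean value theorem both
perturbation terms are bounded and Lipschitz in `λ` with a constant `a_ν = O(μ_s^ν + μ_u^{-ν})`,
which tends to `0`. Once `a_ν ≤ δ/2` with `δ ≤ 1/2`, `F` maps the ball of radius `δ` into itself
(`u² ≤ δ² ≤ δ/2`) and is a contraction, so the Banach fixed point theorem gives the unique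
solution `λ(u,ν)`; the equations themselves give `‖λ(u,ν) - (0,u²)‖ ≤ a_ν`.
-/

open Filter Function Metric Set Topology

def IsBoundedLipschitzOn {α : Type*} [PseudoMetricSpace α] (f : α → ℝ) (s : Set α) (a : ℝ) :
    Prop :=
  ∀ x ∈ s, |f x| ≤ a ∧ ∀ y ∈ s, |f x - f y| ≤ a * dist x y

theorem abs_mul_add_le_of_nonneg {x y b : ℝ} (hb : 0 ≤ b) : |x * b + y| ≤ |x| * b + |y| := by
  simpa [abs_mul, abs_of_nonneg hb] using abs_add_le (x * b) y

namespace IsBoundedLipschitzOn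

variable {α : Type*} [PseudoMetricSpace α] {f c e : α → ℝ} {s t : Set α} {a b : ℝ}

theorem mono (h : IsBoundedLipschitzOn f s a) (hts : t ⊆ s) (hab : a ≤ b) :
    IsBoundedLipschitzOn f t b := fun x hx =>
  ⟨(h x (hts hx)).1.trans hab, fun y hy =>
    ((h x (hts hx)).2 y (hts hy)).trans (mul_le_mul_of_nonneg_right hab dist_nonneg)⟩

theorem mul_const_add (hc : IsBoundedLipschitzOn c s a) (he : IsBoundedLipschitzOn e s b)
    (hb : 0 ≤ b) : IsBoundedLipschitzOn (fun x => c x * b + e x) s ((a + 1) * b) := by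
  intro x hx
  obtain ⟨hcx, hcL⟩ := hc x hx
  obtain ⟨hex, heL⟩ := he x hx
  refine ⟨?_, fun y hy => ?_⟩
  · calc |c x * b + e x| ≤ |c x| * b + |e x| := abs_mul_add_le_of_nonneg hb
      _ ≤ (a + 1) * b := by nlinarith
  · have hcxy := hcL y hy
    have hexy := heL y hy
    calc |c x * b + e x - (c y * b + e y)| = |(c x - c y) * b + (e x - e y)| := by ring_nf
      _ ≤ |c x - c y| * b + |e x - e y| := abs_mul_add_le_of_nonneg hb
      _ ≤ (a + 1) * b * dist x y := by nlinarith

end IsBoundedLipschitzOn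

section Perturbation

variable {E F : Type*} [NormedAddCommGroup E] [NormedSpace ℝ E] [NormedAddCommGroup F]
  [NormedSpace ℝ F] {s : Set E} {t : Set F}

theorem isBoundedLipschitzOn_of_norm_fderiv_le {g : E × F → ℝ} {a : ℝ} (hs : Convex ℝ s)
    (ht : Convex ℝ t) (hg : ∀ p ∈ s ×ˢ t, DifferentiableAt ℝ g p)
    (hbound : ∀ p ∈ s ×ˢ t, |g p| ≤ a ∧ ‖fderiv ℝ g p‖ ≤ a) {x : E} (hx : x ∈ s) :
    IsBoundedLipschitzOn (fun y => g (x, y)) t a := by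
  intro y hy
  refine ⟨(hbound _ ⟨hx, hy⟩).1, fun y' hy' => ?_⟩
  have := (hs.prod ht).norm_image_sub_le_of_norm_fderiv_le hg (fun p hp => (hbound p hp).2)
    (mk_mem_prod hx hy') (mk_mem_prod hx hy)
  rwa [← dist_eq_norm (x, y), dist_prod_same_left, Real.norm_eq_abs] at this

theorem exists_isBoundedLipschitzOn_of_contDiff {c : E × F → ℝ} (hc : ContDiff ℝ 1 c)
    (hs : IsCompact s) (hs' : Convex ℝ s) (ht : IsCompact t) (ht' : Convex ℝ t) :
    ∃ B, ∀ x ∈ s, IsBoundedLipschitzOn (fun y => c (x, y)) t B := by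
  obtain ⟨B₀, hB₀⟩ := (hs.prod ht).exists_bound_of_continuousOn hc.continuous.continuousOn
  obtain ⟨B₁, hB₁⟩ := (hs.prod ht).exists_bound_of_continuousOn
    (hc.continuous_fderiv one_ne_zero).continuousOn
  exact ⟨max B₀ B₁, fun x hx => isBoundedLipschitzOn_of_norm_fderiv_le hs' ht'
    (fun p _ => (hc.differentiable one_ne_zero).differentiableAt)
    (fun p hp => ⟨(hB₀ p hp).trans (le_max_left _ _), (hB₁ p hp).trans (le_max_right _ _)⟩) hx⟩

theorem exists_eventually_isBoundedLipschitzOn_mul_add {ι : Type*} {l : Filter ι}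
    {c : E × F → ℝ} (hc : ContDiff ℝ 1 c) {e : ι → E × F → ℝ} (he : ∀ n, Differentiable ℝ (e n))
    {τ : ι → ℝ} (hτ : ∀ n, 0 ≤ τ n) (hs : IsCompact s) (hs' : Convex ℝ s) (ht : IsCompact t)
    (ht' : Convex ℝ t)
    (hsmall : ∀ᶠ n in l, ∀ p ∈ s ×ˢ t, |e n p| ≤ τ n ∧ ‖fderiv ℝ (e n) p‖ ≤ τ n) :
    ∃ C, ∀ᶠ n in l, ∀ x ∈ s,
      IsBoundedLipschitzOn (fun y => c (x, y) * τ n + e n (x, y)) t (C * τ n) := by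
  obtain ⟨B, hB⟩ := exists_isBoundedLipschitzOn_of_contDiff hc hs hs' ht ht'
  exact ⟨B + 1, hsmall.mono fun n hn x hx => (hB x hx).mul_const_add
    (isBoundedLipschitzOn_of_norm_fderiv_le hs' ht' (fun p _ => (he n).differentiableAt) hn hx)
    (hτ n)⟩

end Perturbation

theorem exists_unique_isFixedPt_of_lipschitzOnWith {α : Type*} [MetricSpace α] {f : α → α}
    {s : Set α} {K : NNReal} (hK : K < 1) (hsc : IsComplete s) (hne : s.Nonempty)
    (hsf : MapsTo f s s) (hf : LipschitzOnWith K f s) : ∃! x, x ∈ s ∧ IsFixedPt f x := by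
  obtain ⟨x₀, hx₀⟩ := hne
  obtain ⟨x, hx, hfx, -⟩ := ContractingWith.exists_fixedPoint' hsc hsf
    ⟨hK, hf.mapsToRestrict hsf⟩ hx₀ (edist_ne_top _ _)
  refine ⟨x, ⟨hx, hfx⟩, fun y ⟨hy, hfy⟩ => ?_⟩
  have hdist := hf.dist_le_mul y hy x hx
  rw [hfy.eq, hfx.eq] at hdist
  have hK' : (K : ℝ) < 1 := hK
  exact dist_le_zero.1 (by nlinarith [dist_nonneg (x := y) (y := x)])

theorem existsUnique_solution_near_parabola {p q : ℝ × ℝ → ℝ} {δ a u : ℝ} (hδ : 0 ≤ δ)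
    (hδ' : δ ≤ 1 / 2) (ha : a ≤ δ / 2) (hu : |u| ≤ δ)
    (hp : IsBoundedLipschitzOn p (closedBall 0 δ) a)
    (hq : IsBoundedLipschitzOn q (closedBall 0 δ) a) :
    ∃! lam : ℝ × ℝ, lam ∈ closedBall 0 δ ∧ lam.1 + p lam = 0 ∧ lam.2 - u ^ 2 + q lam = 0 := by
  set F : ℝ × ℝ → ℝ × ℝ := fun lam => (-p lam, u ^ 2 - q lam)
  have hfix : ∀ lam, IsFixedPt F lam ↔ lam.1 + p lam = 0 ∧ lam.2 - u ^ 2 + q lam = 0 := by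
    intro lam
    rw [IsFixedPt, Prod.ext_iff]
    constructor <;> rintro ⟨h₁, h₂⟩ <;> constructor <;> linarith
  have hmaps : MapsTo F (closedBall 0 δ) (closedBall 0 δ) := by
    intro lam hlam
    have hu2 : u ^ 2 ≤ δ / 2 := by nlinarith [sq_abs u, abs_nonneg u]
    have hpl := (hp lam hlam).1
    have hql := (hq lam hlam).1
    rw [mem_closedBall_zero_iff, norm_prod_le_iff, Real.norm_eq_abs, Real.norm_eq_abs, abs_neg]
    exact ⟨by linarith, (abs_sub _ _).trans (by rw [abs_of_nonneg (sq_nonneg u)]; linarith)⟩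
  have hlip : LipschitzOnWith (1 / 2) F (closedBall 0 δ) := by
    refine LipschitzOnWith.of_dist_le_mul fun x hx y hy => ?_
    have hpxy := (hp x hx).2 y hy
    have hqxy := (hq x hx).2 y hy
    have hd := dist_nonneg (x := x) (y := y)
    rw [abs_sub_comm] at hpxy hqxy
    rw [Prod.dist_eq, max_le_iff, Real.dist_eq, Real.dist_eq, neg_sub_neg, sub_sub_sub_cancel_left]
    push_cast
    constructor <;> nlinarith
  obtain ⟨lam, ⟨hlam, hF⟩, huniq⟩ := exists_unique_isFixedPt_of_lipschitzOnWith
    (by norm_num) isClosed_closedBall.isComplete ⟨0, mem_closedBall_self hδ⟩ hmaps hlip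
  exact ⟨lam, ⟨hlam, (hfix lam).1 hF⟩, fun y ⟨hy, hsol⟩ => huniq y ⟨hy, (hfix y).2 hsol⟩⟩

theorem exists_solution_curves_tendsto_parabola {P Q : ℕ → ℝ → ℝ × ℝ → ℝ} {a : ℕ → ℝ} {ρ : ℝ}
    (hρ : 0 < ρ) (ha : Tendsto a atTop (𝓝 0))
    (hPQ : ∀ᶠ ν in atTop, ∀ u, |u| ≤ ρ → IsBoundedLipschitzOn (P ν u) (closedBall 0 ρ) (a ν) ∧
      IsBoundedLipschitzOn (Q ν u) (closedBall 0 ρ) (a ν)) :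
    ∃ δ > (0:ℝ), ∃ N : ℕ, ∃ L : ℕ → ℝ → ℝ × ℝ,
      (∀ ν > N, ∀ u : ℝ, |u| ≤ δ →
        ‖L ν u‖ ≤ δ ∧ (L ν u).1 + P ν u (L ν u) = 0 ∧ (L ν u).2 - u ^ 2 + Q ν u (L ν u) = 0 ∧
        ∀ lam : ℝ × ℝ, ‖lam‖ ≤ δ → lam.1 + P ν u lam = 0 → lam.2 - u ^ 2 + Q ν u lam = 0 →
          lam = L ν u) ∧
      (∀ ε > (0:ℝ), ∃ M : ℕ, ∀ ν ≥ M, ∀ u : ℝ, |u| ≤ δ → ‖L ν u - (0, u ^ 2)‖ ≤ ε) := by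
  set δ := min ρ (1 / 2)
  have hδ : 0 < δ := lt_min hρ (by norm_num)
  have hδρ : closedBall (0 : ℝ × ℝ) δ ⊆ closedBall 0 ρ :=
    closedBall_subset_closedBall (min_le_left _ _)
  obtain ⟨N, hN⟩ := eventually_atTop.1 ((ha.eventually (ge_mem_nhds (half_pos hδ))).and hPQ)
  have hsol (ν : ℕ) (hν : N ≤ ν) (u : ℝ) (hu : |u| ≤ δ) : ∃! lam : ℝ × ℝ,
      lam ∈ closedBall 0 δ ∧ lam.1 + P ν u lam = 0 ∧ lam.2 - u ^ 2 + Q ν u lam = 0 := by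
    obtain ⟨hP, hQ⟩ := (hN ν hν).2 u (hu.trans (min_le_left _ _))
    exact existsUnique_solution_near_parabola hδ.le (min_le_right _ _) (hN ν hν).1 hu
      (hP.mono hδρ le_rfl) (hQ.mono hδρ le_rfl)
  let L (ν : ℕ) (u : ℝ) : ℝ × ℝ := Classical.epsilon fun lam : ℝ × ℝ =>
    lam ∈ closedBall 0 δ ∧ lam.1 + P ν u lam = 0 ∧ lam.2 - u ^ 2 + Q ν u lam = 0
  have hL (ν : ℕ) (hν : N ≤ ν) (u : ℝ) (hu : |u| ≤ δ) :=
    Classical.epsilon_spec (hsol ν hν u hu).exists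
  refine ⟨δ, hδ, N, L, fun ν hν u hu => ?_, fun ε hε => ?_⟩
  · obtain ⟨hmem, h₁, h₂⟩ := hL ν hν.le u hu
    exact ⟨mem_closedBall_zero_iff.1 hmem, h₁, h₂, fun lam hlam e₁ e₂ =>
      (hsol ν hν.le u hu).unique ⟨mem_closedBall_zero_iff.2 hlam, e₁, e₂⟩ (hL ν hν.le u hu)⟩
  · obtain ⟨M, hM⟩ := eventually_atTop.1 (ha.eventually (ge_mem_nhds hε))
    refine ⟨max M N, fun ν hν u hu => ?_⟩
    obtain ⟨hmem, h₁, h₂⟩ := hL ν (le_of_max_le_right hν) u hu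
    obtain ⟨hP, hQ⟩ := (hN ν (le_of_max_le_right hν)).2 u (hu.trans (min_le_left _ _))
    have hP₁ := (hP _ (hδρ hmem)).1
    have hQ₁ := (hQ _ (hδρ hmem)).1
    have haν := hM ν (le_of_max_le_left hν)
    refine norm_prod_le_iff.2 ⟨?_, ?_⟩ <;>
      simp only [Prod.fst_sub, Prod.snd_sub, sub_zero, Real.norm_eq_abs]
    · rw [eq_neg_of_add_eq_zero_left h₁, abs_neg]
      exact hP₁.trans haν
    · rw [eq_neg_of_add_eq_zero_left h₂, abs_neg]
      exact hQ₁.trans haν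

theorem stmt_12_general (μs μu : ℝ) (hμs : μs ∈ Set.Ioo (0:ℝ) 1) (hμu : 1 < μu)
    (cu cl : ℝ → ℝ × ℝ → ℝ)
    (hcu : ContDiff ℝ 1 (fun p : ℝ × (ℝ × ℝ) => cu p.1 p.2))
    (hcl : ContDiff ℝ 1 (fun p : ℝ × (ℝ × ℝ) => cl p.1 p.2))
    (ρ : ℝ) (hρ : 0 < ρ)
    (r R : ℕ → ℝ → ℝ × ℝ → ℝ)
    (hrC1 : ∀ ν : ℕ, ContDiff ℝ 1 (fun p : ℝ × (ℝ × ℝ) => r ν p.1 p.2))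
    (hRC1 : ∀ ν : ℕ, ContDiff ℝ 1 (fun p : ℝ × (ℝ × ℝ) => R ν p.1 p.2))
    (hr : ∀ ε > (0:ℝ), ∃ N : ℕ, ∀ ν ≥ N, ∀ u : ℝ, |u| ≤ ρ →
      ∀ lam : ℝ × ℝ, ‖lam‖ ≤ ρ →
        |r ν u lam| ≤ ε * μs ^ ν ∧
        ‖fderiv ℝ (fun p : ℝ × (ℝ × ℝ) => r ν p.1 p.2) (u, lam)‖ ≤ ε * μs ^ ν)
    (hR : ∀ ε > (0:ℝ), ∃ N : ℕ, ∀ ν ≥ N, ∀ u : ℝ, |u| ≤ ρ →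
      ∀ lam : ℝ × ℝ, ‖lam‖ ≤ ρ →
        |R ν u lam| ≤ ε * (μu ^ ν)⁻¹ ∧
        ‖fderiv ℝ (fun p : ℝ × (ℝ × ℝ) => R ν p.1 p.2) (u, lam)‖ ≤ ε * (μu ^ ν)⁻¹) :
    ∃ δ > (0:ℝ), ∃ N : ℕ, ∃ L : ℕ → ℝ → ℝ × ℝ,
      (∀ ν > N, ∀ u : ℝ, |u| ≤ δ →
        ‖L ν u‖ ≤ δ ∧
        (L ν u).1 + cu u (L ν u) * μs ^ ν + r ν u (L ν u) = 0 ∧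
        (L ν u).2 - u ^ 2 + cl u (L ν u) * (μu ^ ν)⁻¹ + R ν u (L ν u) = 0 ∧
        (∀ lam : ℝ × ℝ, ‖lam‖ ≤ δ →
          lam.1 + cu u lam * μs ^ ν + r ν u lam = 0 →
          lam.2 - u ^ 2 + cl u lam * (μu ^ ν)⁻¹ + R ν u lam = 0 →
          lam = L ν u)) ∧
      (∀ ε > (0:ℝ), ∃ M : ℕ, ∀ ν ≥ M, ∀ u : ℝ, |u| ≤ δ →
        ‖L ν u - (0, u ^ 2)‖ ≤ ε) := by
  have hball {x : ℝ} : x ∈ closedBall 0 ρ ↔ |x| ≤ ρ := by simp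
  obtain ⟨Cs, hCs⟩ := exists_eventually_isBoundedLipschitzOn_mul_add hcu
    (fun ν => (hrC1 ν).differentiable one_ne_zero) (fun ν => (pow_pos hμs.1 ν).le)
    (isCompact_closedBall 0 ρ) (convex_closedBall 0 ρ) (isCompact_closedBall 0 ρ)
    (convex_closedBall 0 ρ) ((eventually_atTop.2 (hr 1 one_pos)).mono fun ν h p hp => by
      simpa using h p.1 (hball.1 hp.1) p.2 (mem_closedBall_zero_iff.1 hp.2))
  obtain ⟨Cu, hCu⟩ := exists_eventually_isBoundedLipschitzOn_mul_add hcl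
    (fun ν => (hRC1 ν).differentiable one_ne_zero) (τ := fun ν => (μu ^ ν)⁻¹) (fun ν => by positivity)
    (isCompact_closedBall 0 ρ) (convex_closedBall 0 ρ) (isCompact_closedBall 0 ρ)
    (convex_closedBall 0 ρ) ((eventually_atTop.2 (hR 1 one_pos)).mono fun ν h p hp => by
      simpa using h p.1 (hball.1 hp.1) p.2 (mem_closedBall_zero_iff.1 hp.2))
  have ha : Tendsto (fun ν : ℕ => max (Cs * μs ^ ν) (Cu * (μu ^ ν)⁻¹)) atTop (𝓝 0) := by
    simpa using ((tendsto_pow_atTop_nhds_zero_of_lt_one hμs.1.le hμs.2).const_mul Cs).max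
      ((tendsto_inv_atTop_zero.comp (tendsto_pow_atTop_atTop_of_one_lt hμu)).const_mul Cu)
  have := exists_solution_curves_tendsto_parabola hρ ha ((hCs.and hCu).mono fun ν h u hu =>
    ⟨(h.1 u (hball.2 hu)).mono subset_rfl (le_max_left _ _),
      (h.2 u (hball.2 hu)).mono subset_rfl (le_max_right _ _)⟩)
  simpa only [add_assoc] using this

/-- Lemma `turning`: for each large `ν` the bifurcation system for `1`-homoclinic
orbits can be solved uniquely for `λ = λ(u,ν)` near `0`, and the solution curves
converge uniformly to the unperturbed parabola `(0, u²)`. -/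
theorem stmt_12 (μs μu : ℝ) (hμs : μs ∈ Set.Ioo (0:ℝ) 1) (hμu : 1 < μu)
    (cu cl : ℝ → ℝ × ℝ → ℝ)
    (hcu : ContDiff ℝ 1 (fun p : ℝ × (ℝ × ℝ) => cu p.1 p.2))
    (hcl : ContDiff ℝ 1 (fun p : ℝ × (ℝ × ℝ) => cl p.1 p.2))
    (hcl0 : cl 0 (0, 0) ≠ 0)
    (ρ : ℝ) (hρ : 0 < ρ)
    (r R : ℕ → ℝ → ℝ × ℝ → ℝ)
    (hrC1 : ∀ ν : ℕ, ContDiff ℝ 1 (fun p : ℝ × (ℝ × ℝ) => r ν p.1 p.2))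
    (hRC1 : ∀ ν : ℕ, ContDiff ℝ 1 (fun p : ℝ × (ℝ × ℝ) => R ν p.1 p.2))
    (hr : ∀ ε > (0:ℝ), ∃ N : ℕ, ∀ ν ≥ N, ∀ u : ℝ, |u| ≤ ρ →
      ∀ lam : ℝ × ℝ, ‖lam‖ ≤ ρ →
        |r ν u lam| ≤ ε * μs ^ ν ∧
        ‖fderiv ℝ (fun p : ℝ × (ℝ × ℝ) => r ν p.1 p.2) (u, lam)‖ ≤ ε * μs ^ ν)
    (hR : ∀ ε > (0:ℝ), ∃ N : ℕ, ∀ ν ≥ N, ∀ u : ℝ, |u| ≤ ρ →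
      ∀ lam : ℝ × ℝ, ‖lam‖ ≤ ρ →
        |R ν u lam| ≤ ε * (μu ^ ν)⁻¹ ∧
        ‖fderiv ℝ (fun p : ℝ × (ℝ × ℝ) => R ν p.1 p.2) (u, lam)‖ ≤ ε * (μu ^ ν)⁻¹) :
    ∃ δ > (0:ℝ), ∃ N : ℕ, ∃ L : ℕ → ℝ → ℝ × ℝ,
      (∀ ν > N, ∀ u : ℝ, |u| ≤ δ →
        ‖L ν u‖ ≤ δ ∧
        (L ν u).1 + cu u (L ν u) * μs ^ ν + r ν u (L ν u) = 0 ∧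
        (L ν u).2 - u ^ 2 + cl u (L ν u) * (μu ^ ν)⁻¹ + R ν u (L ν u) = 0 ∧
        (∀ lam : ℝ × ℝ, ‖lam‖ ≤ δ →
          lam.1 + cu u lam * μs ^ ν + r ν u lam = 0 →
          lam.2 - u ^ 2 + cl u lam * (μu ^ ν)⁻¹ + R ν u lam = 0 →
          lam = L ν u)) ∧
      (∀ ε > (0:ℝ), ∃ M : ℕ, ∀ ν ≥ M, ∀ u : ℝ, |u| ≤ δ →
        ‖L ν u - (0, u ^ 2)‖ ≤ ε) :=
  stmt_12_general μs μu hμs hμu cu cl hcu hcl ρ hρ r R hrC1 hRC1 hr hR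
end
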